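/- arXiv:2206.00796 — 2 statements merged into one kernel-verified Lean document; each statement's English description precedes it below -/
import Mathlib

section
/- If Σ is positive definite, A is positive semidefinite, α > 0, L ≥ e − 1, and α·tr(Σ^{-1/2}AΣ^{-1/2}) ≤ L, then log(det(Σ + αA)/det(Σ)) ≥ (α/L)·tr(Σ^{-1/2}AΣ^{-1/2}). -/
/-!
Write `Σ = Q * Q` with `Q = Σ^{1/2}` and `B = Q⁻¹ A Q⁻¹ ⪰ 0`. Then `Σ + αA = Q (1 + αB) Q`, so the
determinant ratio is `det (1 + αB) = ∏ (1 + αλᵢ) ≥ 1 + α tr B`, where `λᵢ ≥ 0` are the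
eigenvalues of `B`. Finally `log (1 + x) ≥ x / L` on `[0, L]` because `log` is concave and
`log (1 + L) ≥ 1` exactly when `L ≥ e - 1`.
-/

open Matrix Real

open scoped ComplexOrder in
/-- The matrix square root of a positive semidefinite matrix, as defined in the older Mathlib
(`Matrix.PosSemidef.sqrt`, removed since). -/
noncomputable def Matrix.PosSemidef.sqrt {n : Type*} [Fintype n] [DecidableEq n] {𝕜 : Type*}
    [RCLike 𝕜] {A : Matrix n n 𝕜} (hA : A.PosSemidef) : Matrix n n 𝕜 :=
  hA.1.eigenvectorUnitary.1 * diagonal ((↑) ∘ (√·) ∘ hA.1.eigenvalues) *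
  (star hA.1.eigenvectorUnitary : Matrix n n 𝕜)

theorem Finset.one_add_sum_le_prod_one_add {ι R : Type*} [CommSemiring R] [PartialOrder R]
    [IsOrderedRing R] (s : Finset ι) {f : ι → R} (hf : ∀ i ∈ s, 0 ≤ f i) :
    1 + ∑ i ∈ s, f i ≤ ∏ i ∈ s, (1 + f i) := by
  induction s using Finset.cons_induction with
  | empty => simp
  | cons a s _ ih =>
    rw [Finset.sum_cons, Finset.prod_cons]
    have hfa : 0 ≤ f a := hf a (Finset.mem_cons_self a s)
    have hs : 0 ≤ ∑ i ∈ s, f i := Finset.sum_nonneg fun i hi => hf i (Finset.mem_cons_of_mem hi)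
    calc 1 + (f a + ∑ i ∈ s, f i) ≤ (1 + f a) * (1 + ∑ i ∈ s, f i) :=
          (le_add_of_nonneg_right (mul_nonneg hfa hs)).trans_eq (by ring)
      _ ≤ (1 + f a) * ∏ i ∈ s, (1 + f i) :=
          mul_le_mul_of_nonneg_left (ih fun i hi => hf i (Finset.mem_cons_of_mem hi))
            (add_nonneg zero_le_one hfa)

theorem Matrix.det_add_div_det_eq_det_one_add {n K : Type*} [Fintype n] [DecidableEq n] [Field K]
    {Q S : Matrix n n K} (hQQ : Q * Q = S) (hQ : IsUnit Q.det) (A : Matrix n n K) :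
    (S + A).det / S.det = (1 + Q⁻¹ * A * Q⁻¹).det := by
  have hS : S.det = Q.det * Q.det := by rw [← hQQ, det_mul]
  have hfactor : S + A = Q * (1 + Q⁻¹ * A * Q⁻¹) * Q := by
    rw [← hQQ, mul_add, add_mul, mul_one, ← mul_assoc, ← mul_assoc, mul_nonsing_inv Q hQ, one_mul,
      mul_assoc, nonsing_inv_mul Q hQ, mul_one]
  rw [hfactor, det_mul, det_mul, hS]
  field_simp [hQ.ne_zero]

theorem Real.div_le_log_one_add {x L : ℝ} (hx : 0 ≤ x) (hxL : x ≤ L) (hL : exp 1 - 1 ≤ L) :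
    x / L ≤ log (1 + x) := by
  have hL0 : 0 < L := lt_of_lt_of_le (by linarith [add_one_lt_exp one_ne_zero]) hL
  have ht : 0 ≤ x / L := div_nonneg hx hL0.le
  have ht1 : 0 ≤ 1 - x / L := sub_nonneg.mpr (div_le_one_of_le₀ hxL hL0.le)
  have hconc : x / L * log (1 + L) ≤ log (1 + x) := by
    have h := strictConcaveOn_log_Ioi.concaveOn.2 (Set.mem_Ioi.mpr one_pos)
      (Set.mem_Ioi.mpr (by linarith : (0 : ℝ) < 1 + L)) ht1 ht (by ring)
    have hmid : (1 - x / L) • (1 : ℝ) + (x / L) • (1 + L) = 1 + x := by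
      simp only [smul_eq_mul]; field_simp; ring
    rw [hmid] at h
    simpa using h
  have hlog : 1 ≤ log (1 + L) := (le_log_iff_exp_le (by linarith)).mpr (by linarith)
  nlinarith

namespace Matrix.PosSemidef

variable {n : Type*} [Fintype n] [DecidableEq n]

section Sqrt

open scoped ComplexOrder

variable {𝕜 : Type*} [RCLike 𝕜] {A : Matrix n n 𝕜}

lemma sqrt_eq_cfc (hA : A.PosSemidef) : hA.sqrt = cfc Real.sqrt A := by
  rw [hA.1.cfc_eq]; rfl

lemma sqrt_mul_self (hA : A.PosSemidef) : hA.sqrt * hA.sqrt = A := by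
  have hspec : ∀ x ∈ spectrum ℝ A, 0 ≤ x := by
    intro x hx
    rw [hA.1.spectrum_real_eq_range_eigenvalues] at hx
    obtain ⟨i, rfl⟩ := hx
    exact hA.eigenvalues_nonneg i
  have hA' : IsSelfAdjoint A := hA.1
  rw [sqrt_eq_cfc, ← cfc_mul _ _ A]
  conv_rhs => rw [← cfc_id' ℝ A]
  exact cfc_congr fun x hx => Real.mul_self_sqrt (hspec x hx)

lemma isHermitian_sqrt (hA : A.PosSemidef) : hA.sqrt.IsHermitian := by
  rw [sqrt_eq_cfc]; exact cfc_predicate _ _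

end Sqrt

lemma one_add_trace_le_det_one_add {M : Matrix n n ℝ} (hM : M.PosSemidef) :
    1 + M.trace ≤ (1 + M).det := by
  have hdet : (1 + M).det = ∏ i, (1 + hM.1.eigenvalues i) := by
    conv_lhs => rw [hM.1.spectral_theorem,
      ← map_one (Unitary.conjStarAlgAut ℝ _ hM.1.eigenvectorUnitary), ← map_add]
    simp [-Unitary.conjStarAlgAut_apply, ← diagonal_one, diagonal_add]
  rw [hdet, hM.1.trace_eq_sum_eigenvalues]
  simpa using Finset.univ.one_add_sum_le_prod_one_add fun i _ => hM.eigenvalues_nonneg i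

end Matrix.PosSemidef

/-- Deterministic information gain lower bound: for positive definite `Σ`, PSD `A`,
`α > 0`, `L ≥ e - 1` and `α · tr(Σ^{-1/2} A Σ^{-1/2}) ≤ L`, we have
`log (det (Σ + α A) / det Σ) ≥ (α / L) · tr(Σ^{-1/2} A Σ^{-1/2})`. -/
theorem stmt_3 {d : ℕ} (S A : Matrix (Fin d) (Fin d) ℝ)
    (hS : S.PosDef) (hA : A.PosSemidef)
    (α : ℝ) (hα : 0 < α) (L : ℝ) (hL : Real.exp 1 - 1 ≤ L)
    (htr : α * ((PosSemidef.sqrt hS.posSemidef)⁻¹ * A * (PosSemidef.sqrt hS.posSemidef)⁻¹).trace ≤ L) :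
    (α / L) * ((PosSemidef.sqrt hS.posSemidef)⁻¹ * A * (PosSemidef.sqrt hS.posSemidef)⁻¹).trace
      ≤ Real.log ((S + α • A).det / S.det) := by
  set Q := PosSemidef.sqrt hS.posSemidef
  set B := Q⁻¹ * A * Q⁻¹
  have hQQ : Q * Q = S := hS.posSemidef.sqrt_mul_self
  have hQ : IsUnit Q.det :=
    isUnit_iff_ne_zero.mpr fun h => hS.det_pos.ne' (by rw [← hQQ, det_mul, h, zero_mul])
  have hB : B.PosSemidef := by
    have h := hA.mul_mul_conjTranspose_same Q⁻¹
    rwa [hS.posSemidef.isHermitian_sqrt.inv.eq] at h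
  have hαB : (α • B).PosSemidef := hB.smul hα.le
  rw [det_add_div_det_eq_det_one_add hQQ hQ, mul_smul_comm, smul_mul_assoc]
  calc α / L * B.trace = α * B.trace / L := by ring
    _ ≤ log (1 + α * B.trace) := div_le_log_one_add (mul_nonneg hα.le hB.trace_nonneg) htr hL
    _ = log (1 + (α • B).trace) := by rw [trace_smul, smul_eq_mul]
    _ ≤ log (1 + α • B).det :=
      log_le_log (by linarith [hαB.trace_nonneg]) hαB.one_add_trace_le_det_one_add
end

section
/- Optimism propagation by backward induction: in a finite-horizon MDP with horizon H, suppose Q̂_{H+1} = Q⋆_{H+1} = 0 and for each h, Q̂_h(s,a) = (T_h Q̂_{h+1})(s,a) + err_h(s,a) with err_h(s,a) ≥ −Δ_h(s,a) pointwise, where T_h is the Bellman optimality operator and Δ_h ≥ 0. Then for all h, s, a: Q̂_h(s,a) ≥ Q⋆_h(s,a) − Σ_{τ=h}^H E_{(s'_τ,a'_τ) ~ π⋆ | (s,a)}[Δ_τ(s'_τ,a'_τ)]. -/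
/-!
Backward induction on `h`. If `Q⋆_{h+1} - G_{h+1} ≤ Q̂_{h+1}`, then at every next state the
greedy action `π⋆_{h+1}(s')` gives `max Q⋆_{h+1}(s', ·) - G_{h+1}(s', π⋆_{h+1} s') ≤ max Q̂_{h+1}(s', ·)`;
averaging with the nonnegative weights `P_h(s' | s, a)` and absorbing `err_h ≥ -Δ_h` into the
`Δ_h` term of `G_h` gives the claim at step `h`.
-/

open Finset

section BellmanBackup

variable {S A : Type*} [Fintype S] [Fintype A] [Nonempty A]

noncomputable def bellmanBackup (p : S → A → S → ℝ) (r : S → A → ℝ) (Q : S → A → ℝ)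
    (s : S) (a : A) : ℝ :=
  r s a + ∑ s', p s a s' * univ.sup' univ_nonempty (Q s')

theorem Finset.sup'_sub_le_sup'_of_eq_sup' {ι α : Type*} [LinearOrder α] [AddGroup α]
    [AddRightMono α] {s : Finset ι} (hs : s.Nonempty) {f g c : ι → α} {i : ι} (hi : i ∈ s)
    (hfi : f i = s.sup' hs f) (hle : ∀ j, f j - c j ≤ g j) :
    s.sup' hs f - c i ≤ s.sup' hs g :=
  hfi ▸ (hle i).trans (le_sup' g hi)

theorem bellmanBackup_sub_le {p : S → A → S → ℝ} (hp : ∀ s a s', 0 ≤ p s a s')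
    (r : S → A → ℝ) {Qstar Qhat G : S → A → ℝ} {π : S → A}
    (hπ : ∀ s, Qstar s (π s) = univ.sup' univ_nonempty (Qstar s))
    (hle : ∀ s a, Qstar s a - G s a ≤ Qhat s a) (s : S) (a : A) :
    bellmanBackup p r Qstar s a - ∑ s', p s a s' * G s' (π s') ≤ bellmanBackup p r Qhat s a := by
  have hstep : ∀ s', p s a s' * univ.sup' univ_nonempty (Qstar s') - p s a s' * G s' (π s')
      ≤ p s a s' * univ.sup' univ_nonempty (Qhat s') := fun s' => by
    rw [← mul_sub]
    exact mul_le_mul_of_nonneg_left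
      (sup'_sub_le_sup'_of_eq_sup' _ (mem_univ _) (hπ s') (hle s')) (hp s a s')
  have hsum := sum_le_sum fun s' (_ : s' ∈ univ) => hstep s'
  rw [sum_sub_distrib] at hsum
  unfold bellmanBackup
  linarith

end BellmanBackup

/-- `G h s a` encodes `E_{π⋆ | (s, a)} [∑_{τ = h}^{H} Δ_τ]` through its backward recursion `hG`. -/
theorem stmt_19_general {S : Type*} [Fintype S] {A : Type*} [Fintype A] [Nonempty A]
    (H : ℕ)
    (p : ℕ → S → A → S → ℝ)
    (hp0 : ∀ h s a s', 0 ≤ p h s a s')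
    (r : ℕ → S → A → ℝ)
    (Qstar Qhat err Δ : ℕ → S → A → ℝ)
    (πstar : ℕ → S → A)
    (G : ℕ → S → A → ℝ)
    (hQstarEnd : ∀ s a, Qstar (H + 1) s a = 0)
    (hQhatEnd : ∀ s a, Qhat (H + 1) s a = 0)
    (hGEnd : ∀ s a, G (H + 1) s a = 0)
    (hQstar : ∀ h, 1 ≤ h → h ≤ H → ∀ s a,
      Qstar h s a = r h s a + ∑ s', p h s a s' *
        (Finset.univ.sup' Finset.univ_nonempty fun a' => Qstar (h + 1) s' a'))
    (hQhat : ∀ h, 1 ≤ h → h ≤ H → ∀ s a,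
      Qhat h s a = r h s a + (∑ s', p h s a s' *
        (Finset.univ.sup' Finset.univ_nonempty fun a' => Qhat (h + 1) s' a')) + err h s a)
    (herr : ∀ h s a, -(Δ h s a) ≤ err h s a)
    (hπstar : ∀ h s, Qstar h s (πstar h s)
      = Finset.univ.sup' Finset.univ_nonempty fun a => Qstar h s a)
    (hG : ∀ h, 1 ≤ h → h ≤ H → ∀ s a,
      G h s a = Δ h s a + ∑ s', p h s a s' * G (h + 1) s' (πstar (h + 1) s')) :
    ∀ h, 1 ≤ h → h ≤ H + 1 → ∀ s a, Qstar h s a - G h s a ≤ Qhat h s a := by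
  intro h h1 hle
  induction hle using Nat.decreasingInduction with
  | self => simp [hQstarEnd, hQhatEnd, hGEnd]
  | of_succ k hk ih =>
    intro s a
    have hkH : k ≤ H := Nat.le_of_lt_succ hk
    have hbackup := bellmanBackup_sub_le (hp0 k) (r k) (hπstar (k + 1)) (ih (by omega)) s a
    rw [hQstar k h1 hkH, hQhat k h1 hkH, hG k h1 hkH]
    unfold bellmanBackup at hbackup
    linarith [herr k s a]

/-- Optimism propagation by backward induction in a finite-horizon MDP: if
`Q̂_{H+1} = Q⋆_{H+1} = 0`, `Q̂_h = T_h Q̂_{h+1} + err_h` with `err_h ≥ -Δ_h`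
pointwise and `Δ_h ≥ 0`, where `T_h` is the Bellman optimality operator, then
`Q̂_h(s,a) ≥ Q⋆_h(s,a) − E_{π⋆|(s,a)}[Σ_{τ=h}^H Δ_τ]`, the latter expectation being
encoded by the `π⋆`-evaluation `G` of `Δ`. -/
theorem stmt_19 {S : Type*} [Fintype S] {A : Type*} [Fintype A] [Nonempty A]
    (H : ℕ)
    (p : ℕ → S → A → S → ℝ)
    (hp0 : ∀ h s a s', 0 ≤ p h s a s')
    (hp1 : ∀ h s a, ∑ s', p h s a s' = 1)
    (r : ℕ → S → A → ℝ)
    (Qstar Qhat err Δ : ℕ → S → A → ℝ)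
    (πstar : ℕ → S → A)
    (G : ℕ → S → A → ℝ)
    (hQstarEnd : ∀ s a, Qstar (H + 1) s a = 0)
    (hQhatEnd : ∀ s a, Qhat (H + 1) s a = 0)
    (hGEnd : ∀ s a, G (H + 1) s a = 0)
    (hQstar : ∀ h, 1 ≤ h → h ≤ H → ∀ s a,
      Qstar h s a = r h s a + ∑ s', p h s a s' *
        (Finset.univ.sup' Finset.univ_nonempty fun a' => Qstar (h + 1) s' a'))
    (hQhat : ∀ h, 1 ≤ h → h ≤ H → ∀ s a,
      Qhat h s a = r h s a + (∑ s', p h s a s' *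
        (Finset.univ.sup' Finset.univ_nonempty fun a' => Qhat (h + 1) s' a')) + err h s a)
    (herr : ∀ h s a, -(Δ h s a) ≤ err h s a)
    (hΔ : ∀ h s a, 0 ≤ Δ h s a)
    (hπstar : ∀ h s, Qstar h s (πstar h s)
      = Finset.univ.sup' Finset.univ_nonempty fun a => Qstar h s a)
    (hG : ∀ h, 1 ≤ h → h ≤ H → ∀ s a,
      G h s a = Δ h s a + ∑ s', p h s a s' * G (h + 1) s' (πstar (h + 1) s')) :
    ∀ h, 1 ≤ h → h ≤ H + 1 → ∀ s a, Qstar h s a - G h s a ≤ Qhat h s a :=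
  stmt_19_general H p hp0 r Qstar Qhat err Δ πstar G hQstarEnd hQhatEnd hGEnd hQstar hQhat herr
    hπstar hG
end
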